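/- The closure of the reachable set from the north pole is axisymmetric: if γ > 0, then for every s ∈ ℝ, Rot_s(cl C₊((0,0,1))) = cl C₊((0,0,1)). -/

import Mathlib

open MeasureTheory Set

noncomputable section

/-- The state space: Bloch vectors in `ℝ³` with the Euclidean norm. -/
abbrev Pt := EuclideanSpace ℝ (Fin 3)

/-- The drift vector field `f₀`. -/
def f0 (ω γ : ℝ) (r : Pt) : Pt :=
  !₂[-r 1 - (γ / (2 * ω)) * r 0, r 0 - (γ / (2 * ω)) * r 1, (γ / ω) * (1 - r 2)]

/-- The coherent-control vector field `f₁` (infinitesimal rotation about the `r_x`-axis). -/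
def f1 (r : Pt) : Pt := !₂[0, -r 2, r 1]

/-- The incoherent-control vector field `f₂`. -/
def f2 (r : Pt) : Pt := !₂[-r 0 / 2, -r 1 / 2, -r 2]

/-- Velocity of the system with only coherent control `u`. -/
def velC (ω κ γ : ℝ) (u : ℝ → ℝ) (r : ℝ → Pt) (t : ℝ) : Pt :=
  ω • f0 ω γ (r t) + (2 * κ * u t) • f1 (r t)

/-- Forward reachable set `C₊(r⁰)` using only coherent control: endpoints of absolutely
continuous trajectories, encoded via the integral equation with integrable right-hand side. -/
def reachC (ω κ γ : ℝ) (r0 : Pt) : Set Pt :=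
  {r1 | ∃ (T : ℝ) (u : ℝ → ℝ) (r : ℝ → Pt), 0 ≤ T ∧
    IntegrableOn u (Icc 0 T) ∧
    IntervalIntegrable (velC ω κ γ u r) volume 0 T ∧
    (∀ t ∈ Icc 0 T, r t = r0 + ∫ s in (0:ℝ)..t, velC ω κ γ u r s) ∧
    r T = r1}

/-- Rotation by angle `s` about the `r_x`-axis. -/
def Rot (s : ℝ) (r : Pt) : Pt :=
  !₂[r 0, r 1 * Real.cos s - r 2 * Real.sin s, r 1 * Real.sin s + r 2 * Real.cos s]

/-!
From a reachable point `x`, switching on the coherent control at amplitude `s / ε` for a time `ε`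
moves the state to `exp (ε L + s B) (x + O(ε))`, where `L` is the drift and `B` generates the
rotations about the `r_x`-axis. As `ε → 0` this tends to `exp (s B) x = Rot s x`, so by
transitivity of reachability `Rot s x` lies in the closure of the reachable set. Continuity of
`Rot s` extends this to the closure, and `Rot (-s)` gives the reverse inclusion.
-/

open NormedSpace Filter Topology

section OperatorExp

variable {E : Type*} [NormedAddCommGroup E] [NormedSpace ℝ E]

-- `NormedSpace.exp` needs a `ℚ`-algebra structure, which is not inferred for operator algebras.
instance : NormedAlgebra ℚ (E →L[ℝ] E) := .restrictScalars ℚ ℝ _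

variable [CompleteSpace E]

theorem exp_smul_mul_exp_neg_smul (B : E →L[ℝ] E) (t : ℝ) :
    exp (t • B) * exp (-(t • B)) = 1 := by
  rw [← exp_add_of_commute ((Commute.refl _).neg_right), add_neg_cancel, exp_zero]

theorem eq_exp_smul_of_hasDerivAt {R : ℝ → E →L[ℝ] E} {B : E →L[ℝ] E}
    (hR : ∀ t, HasDerivAt R (B * R t) t) (hR0 : R 0 = 1) (t : ℝ) : R t = exp (t • B) := by
  have hexp : ∀ t : ℝ, HasDerivAt (fun t : ℝ => exp (-(t • B))) (-(B * exp (-(t • B)))) t :=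
    fun t => by simpa [Function.comp_def] using
      (hasDerivAt_exp_smul_const' B (-t)).scomp t (hasDerivAt_neg t)
  have hderiv : ∀ t, HasDerivAt (fun t : ℝ => exp (-(t • B)) * R t) 0 t := fun t => by
    have hcomm : Commute B (exp (-(t • B))) :=
      ((Commute.refl B).smul_right _).neg_right.exp_right
    refine ((hexp t).mul (hR t)).congr_deriv ?_
    rw [← mul_assoc, hcomm.eq, neg_mul, neg_add_cancel]
  have hconst : exp (-(t • B)) * R t = 1 := by
    simpa [hR0] using is_const_of_deriv_eq_zero (fun t => (hderiv t).differentiableAt)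
      (fun t => (hderiv t).deriv) t 0
  calc R t = exp (t • B) * (exp (-(t • B)) * R t) := by
        rw [← mul_assoc, exp_smul_mul_exp_neg_smul, one_mul]
    _ = exp (t • B) := by rw [hconst, mul_one]

theorem exp_smul_eq_of_mul_mul_self_eq_neg {B : E →L[ℝ] E} (hB : B * (B * B) = -B) (t : ℝ) :
    exp (t • B) = 1 + Real.sin t • B + (1 - Real.cos t) • (B * B) := by
  refine (eq_exp_smul_of_hasDerivAt
    (R := fun t => 1 + Real.sin t • B + (1 - Real.cos t) • (B * B)) (fun t => ?_) (by simp) t).symm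
  have h := (((Real.hasDerivAt_sin t).smul_const B).const_add 1).add
    ((((Real.hasDerivAt_cos t).const_sub 1).smul_const (B * B)))
  refine h.congr_deriv ?_
  rw [mul_add, mul_add, mul_one, mul_smul_comm, mul_smul_comm, hB]
  module

end OperatorExp

section AffineFlow

variable {E : Type*} [NormedAddCommGroup E] [NormedSpace ℝ E]

/-- Duhamel's formula for the solution of `y' = M y + c`, `y 0 = x`. -/
def affineFlow (M : E →L[ℝ] E) (c : E) (t : ℝ) (x : E) : E :=
  exp (t • M) (x + ∫ σ in (0 : ℝ)..t, exp (-(σ • M)) c)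

variable (M : E →L[ℝ] E) (c x : E)

@[simp] theorem affineFlow_zero : affineFlow M c 0 x = x := by
  simp [affineFlow]

theorem affineFlow_inv_smul (A : E →L[ℝ] E) {ε : ℝ} (hε : ε ≠ 0) :
    affineFlow (ε⁻¹ • A) c ε x = exp A (x + ε • ∫ τ in (0 : ℝ)..1, exp (-(τ • A)) c) := by
  have hrescale : ∀ τ : ℝ, (ε * τ) • ε⁻¹ • A = τ • A := fun τ => by
    rw [smul_smul, mul_right_comm, mul_inv_cancel₀ hε, one_mul]
  have hint := intervalIntegral.smul_integral_comp_mul_left (a := 0) (b := 1)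
    (fun σ => exp (-(σ • ε⁻¹ • A)) c) ε
  simp only [hrescale, mul_zero, mul_one] at hint
  rw [affineFlow, smul_inv_smul₀ hε, hint]

variable [CompleteSpace E]

theorem hasDerivAt_affineFlow (t : ℝ) :
    HasDerivAt (affineFlow M c · x) (M (affineFlow M c t x) + c) t := by
  have hcont : Continuous fun σ : ℝ => exp (-(σ • M)) c := by fun_prop
  have h := (hasDerivAt_exp_smul_const M t).clm_apply
    (((hcont.integral_hasStrictDerivAt 0 t).hasDerivAt).const_add x)
  have hcomm : Commute (exp (t • M)) M := ((Commute.refl M).smul_left t).exp_left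
  refine h.congr_deriv ?_
  rw [hcomm.eq, ← mul_apply_eq_comp (exp (t • M)), exp_smul_mul_exp_neg_smul]
  rfl

theorem continuous_affineFlow : Continuous (affineFlow M c · x) :=
  continuous_iff_continuousAt.2 fun t => (hasDerivAt_affineFlow M c x t).continuousAt

theorem affineFlow_eq_add_integral (t : ℝ) :
    affineFlow M c t x = x + ∫ σ in (0 : ℝ)..t, (M (affineFlow M c σ x) + c) := by
  have hvel : Continuous fun σ => M (affineFlow M c σ x) + c :=
    (M.continuous.comp (continuous_affineFlow M c x)).add continuous_const
  rw [intervalIntegral.integral_eq_sub_of_hasDerivAt (fun σ _ => hasDerivAt_affineFlow M c x σ)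
    (hvel.intervalIntegrable _ _)]
  simp

theorem tendsto_affineFlow_add_div_smul (L B : E →L[ℝ] E) (s : ℝ) :
    Tendsto (fun ε => affineFlow (L + (s / ε) • B) c ε x) (𝓝[≠] 0) (𝓝 (exp (s • B) x)) := by
  set A : ℝ → E →L[ℝ] E := fun ε => ε • L + s • B
  set g : ℝ → E := fun ε => exp (A ε) (x + ε • ∫ τ in (0 : ℝ)..1, exp (-(τ • A ε)) c)
  have hg : Continuous g := by fun_prop
  have hg0 : g 0 = exp (s • B) x := by simp [g, A]
  refine hg0 ▸ (hg.tendsto 0).mono_left nhdsWithin_le_nhds |>.congr' ?_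
  filter_upwards [self_mem_nhdsWithin] with ε (hε : ε ≠ 0)
  have hA : L + (s / ε) • B = ε⁻¹ • A ε := by
    simp only [A, smul_add, smul_smul, inv_mul_cancel₀ hε, one_smul, div_eq_inv_mul]
  rw [hA, affineFlow_inv_smul _ _ _ hε]

end AffineFlow

section Concatenation

variable {α E : Type*} [NormedAddCommGroup E] {T T' t : ℝ}

def concatAt (T : ℝ) (f g : ℝ → α) (t : ℝ) : α := if t ≤ T then f t else g (t - T)

theorem concatAt_of_le (f g : ℝ → α) (ht : t ≤ T) : concatAt T f g t = f t := if_pos ht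

theorem concatAt_of_lt (f g : ℝ → α) (ht : T < t) : concatAt T f g t = g (t - T) :=
  if_neg ht.not_ge

theorem intervalIntegrable_concatAt {f g : ℝ → E} (hT : 0 ≤ T) (hT' : 0 ≤ T')
    (hf : IntervalIntegrable f volume 0 T) (hg : IntervalIntegrable g volume 0 T') :
    IntervalIntegrable (concatAt T f g) volume 0 (T + T') := by
  have hleft : IntervalIntegrable (concatAt T f g) volume 0 T :=
    hf.congr fun σ hσ => (concatAt_of_le f g (uIoc_of_le hT ▸ hσ).2).symm
  have hright : IntervalIntegrable (concatAt T f g) volume T (T + T') := by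
    have := hg.comp_sub_right T
    rw [zero_add, add_comm] at this
    exact this.congr fun σ hσ =>
      (concatAt_of_lt f g (uIoc_of_le (le_add_of_nonneg_right hT') ▸ hσ).1).symm
  exact hleft.trans hright

theorem integral_concatAt [NormedSpace ℝ E] {f g : ℝ → E} (hT : 0 ≤ T) (ht : T ≤ t)
    (hf : IntervalIntegrable f volume 0 T) (hg : IntervalIntegrable g volume 0 (t - T)) :
    ∫ σ in (0 : ℝ)..t, concatAt T f g σ =
      (∫ σ in (0 : ℝ)..T, f σ) + ∫ σ in (0 : ℝ)..(t - T), g σ := by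
  have hcat := intervalIntegrable_concatAt hT (sub_nonneg.2 ht) hf hg
  rw [add_sub_cancel] at hcat
  rw [← intervalIntegral.integral_add_adjacent_intervals (b := T)
      (hcat.mono_set ?_) (hcat.mono_set ?_)]
  · have hleft : ∫ σ in (0 : ℝ)..T, concatAt T f g σ = ∫ σ in (0 : ℝ)..T, f σ :=
      intervalIntegral.integral_congr_uIoo fun σ hσ =>
        concatAt_of_le f g (uIoo_of_le hT ▸ hσ).2.le
    have hright : ∫ σ in T..t, concatAt T f g σ = ∫ σ in T..t, g (σ - T) :=
      intervalIntegral.integral_congr_uIoo fun σ hσ => concatAt_of_lt f g (uIoo_of_le ht ▸ hσ).1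
    rw [hleft, hright, intervalIntegral.integral_comp_sub_right, sub_self]
  · exact uIcc_subset_uIcc_left (by simp [uIcc_of_le (hT.trans ht), hT, ht])
  · exact uIcc_subset_uIcc_right (by simp [uIcc_of_le (hT.trans ht), hT, ht])

end Concatenation

def rotGen : Pt →L[ℝ] Pt := Matrix.toEuclideanCLM (𝕜 := ℝ) !![0, 0, 0; 0, 0, -1; 0, 1, 0]

def driftLin (ω γ : ℝ) : Pt →L[ℝ] Pt :=
  Matrix.toEuclideanCLM (𝕜 := ℝ) !![-(γ / 2), -ω, 0; ω, -(γ / 2), 0; 0, 0, -γ]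

theorem rotGen_apply (r : Pt) : rotGen r = f1 r := by
  ext i
  fin_cases i <;>
    simp [rotGen, Matrix.ofLp_toEuclideanCLM, f1, Matrix.mulVec, dotProduct, Fin.sum_univ_three]

theorem rotGen_mul_rotGen_mul_rotGen : rotGen * (rotGen * rotGen) = -rotGen := by
  rw [rotGen, ← map_mul, ← map_mul, ← map_neg]
  congr 1
  ext i j
  fin_cases i <;> fin_cases j <;> simp [Matrix.mul_apply, Fin.sum_univ_three]

theorem rot_eq_exp_smul_rotGen (s : ℝ) : Rot s = exp (s • rotGen) := by
  funext r
  rw [exp_smul_eq_of_mul_mul_self_eq_neg rotGen_mul_rotGen_mul_rotGen]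
  ext i
  fin_cases i <;> simp [Rot, rotGen_apply, f1] <;> ring

theorem smul_f0_add_smul_f1 {ω : ℝ} (hω : ω ≠ 0) (γ a : ℝ) (r : Pt) :
    ω • f0 ω γ r + a • f1 r = (driftLin ω γ + a • rotGen) r + !₂[0, 0, γ] := by
  ext i
  fin_cases i <;>
    simp [driftLin, rotGen_apply, Matrix.ofLp_toEuclideanCLM, f0, f1, Matrix.mulVec, dotProduct,
      Fin.sum_univ_three] <;>
    field_simp <;> ring

theorem velC_concatAt (ω κ γ T : ℝ) (u v : ℝ → ℝ) (r q : ℝ → Pt) :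
    velC ω κ γ (concatAt T u v) (concatAt T r q) =
      concatAt T (velC ω κ γ u r) (velC ω κ γ v q) := by
  funext t
  unfold velC concatAt
  split_ifs <;> rfl

theorem reachC_trans {ω κ γ : ℝ} {r0 r1 r2 : Pt} (h₁ : r1 ∈ reachC ω κ γ r0)
    (h₂ : r2 ∈ reachC ω κ γ r1) : r2 ∈ reachC ω κ γ r0 := by
  obtain ⟨T, u, r, hT, hu, hvel, hr, rfl⟩ := h₁
  obtain ⟨T', v, q, hT', hv, hvel', hq, rfl⟩ := h₂
  refine ⟨T + T', concatAt T u v, concatAt T r q, add_nonneg hT hT', ?_, ?_, ?_, ?_⟩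
  · rw [← intervalIntegrable_iff_integrableOn_Icc_of_le (add_nonneg hT hT')]
    rw [← intervalIntegrable_iff_integrableOn_Icc_of_le hT] at hu
    rw [← intervalIntegrable_iff_integrableOn_Icc_of_le hT'] at hv
    exact intervalIntegrable_concatAt hT hT' hu hv
  · rw [velC_concatAt]
    exact intervalIntegrable_concatAt hT hT' hvel hvel'
  · rintro t ⟨ht0, ht⟩
    rw [velC_concatAt]
    rcases le_or_gt t T with htT | hTt
    · rw [concatAt_of_le _ _ htT, hr t ⟨ht0, htT⟩]
      congr 1
      exact intervalIntegral.integral_congr fun σ hσ =>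
        (concatAt_of_le _ _ ((uIcc_of_le ht0 ▸ hσ).2.trans htT)).symm
    · have htT' : t - T ∈ Icc 0 T' := ⟨sub_nonneg.2 hTt.le, by linarith⟩
      have hvel'' := hvel'.mono_set (uIcc_subset_uIcc_left (uIcc_of_le hT' ▸ htT'))
      rw [concatAt_of_lt _ _ hTt, hq _ htT', hr T ⟨hT, le_rfl⟩, add_assoc,
        integral_concatAt hT hTt.le hvel hvel'']
  · rcases hT'.eq_or_lt with rfl | hpos
    · rw [add_zero, concatAt_of_le _ _ le_rfl, hq 0 ⟨le_rfl, le_rfl⟩]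
      simp
    · rw [concatAt_of_lt _ _ (lt_add_of_pos_right T hpos), add_sub_cancel_left]

theorem affineFlow_mem_reachC {ω : ℝ} (hω : ω ≠ 0) (κ γ a : ℝ) {ε : ℝ} (hε : 0 ≤ ε) (x : Pt) :
    affineFlow (driftLin ω γ + (2 * κ * a) • rotGen) !₂[0, 0, γ] ε x ∈ reachC ω κ γ x := by
  set M := driftLin ω γ + (2 * κ * a) • rotGen
  have hvel : velC ω κ γ (fun _ => a) (affineFlow M !₂[0, 0, γ] · x) =
      fun t => M (affineFlow M !₂[0, 0, γ] t x) + !₂[0, 0, γ] :=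
    funext fun t => smul_f0_add_smul_f1 hω γ _ _
  refine ⟨ε, fun _ => a, (affineFlow M !₂[0, 0, γ] · x), hε,
    integrableOn_const measure_Icc_lt_top.ne, ?_, fun t _ => ?_, rfl⟩
  · rw [hvel]
    exact ((M.continuous.comp (continuous_affineFlow _ _ x)).add continuous_const
      ).intervalIntegrable _ _
  · rw [hvel]
    exact affineFlow_eq_add_integral M _ x t

theorem rot_mem_closure_reachC {ω κ γ : ℝ} (hω : ω ≠ 0) (hκ : κ ≠ 0) {r0 x : Pt}
    (hx : x ∈ reachC ω κ γ r0) (s : ℝ) : Rot s x ∈ closure (reachC ω κ γ r0) := by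
  rw [rot_eq_exp_smul_rotGen]
  refine mem_closure_of_tendsto ((tendsto_affineFlow_add_div_smul !₂[0, 0, γ] x
    (driftLin ω γ) rotGen s).mono_left (nhdsGT_le_nhdsNE 0)) ?_
  filter_upwards [self_mem_nhdsWithin] with ε (hε : 0 < ε)
  have hcoef : 2 * κ * (s / (2 * κ * ε)) = s / ε := by field_simp
  exact reachC_trans hx (hcoef ▸ affineFlow_mem_reachC hω κ γ _ hε.le x)

theorem image_rot_closure_reachC_subset {ω κ γ : ℝ} (hω : ω ≠ 0) (hκ : κ ≠ 0) (r0 : Pt)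
    (s : ℝ) : Rot s '' closure (reachC ω κ γ r0) ⊆ closure (reachC ω κ γ r0) := by
  have hcont : Continuous (Rot s) := by
    rw [rot_eq_exp_smul_rotGen]
    exact (exp (s • rotGen)).continuous
  refine (image_closure_subset_closure_image hcont).trans (closure_minimal ?_ isClosed_closure)
  rintro _ ⟨x, hx, rfl⟩
  exact rot_mem_closure_reachC hω hκ hx s

theorem rot_rot_neg (s : ℝ) (r : Pt) : Rot s (Rot (-s) r) = r := by
  ext i
  fin_cases i <;> simp [Rot]
  · linear_combination r 1 * Real.sin_sq_add_cos_sq s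
  · linear_combination r 2 * Real.sin_sq_add_cos_sq s

theorem closure_reach_axisymmetric_general (ω κ γ : ℝ) (hω : 0 < ω) (hκ : 0 < κ)
    (s : ℝ) :
    Rot s '' closure (reachC ω κ γ !₂[0, 0, 1]) = closure (reachC ω κ γ !₂[0, 0, 1]) := by
  have hsub := image_rot_closure_reachC_subset hω.ne' hκ.ne' (γ := γ) !₂[0, 0, 1]
  exact (hsub s).antisymm fun r hr => ⟨Rot (-s) r, hsub (-s) ⟨r, hr, rfl⟩, rot_rot_neg s r⟩

/-- The closure of the reachable set from the north pole `(0,0,1)` is axisymmetric with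
respect to rotations about the `r_x`-axis. -/
theorem closure_reach_axisymmetric (ω κ γ : ℝ) (hω : 0 < ω) (hκ : 0 < κ) (hγ : 0 < γ)
    (s : ℝ) :
    Rot s '' closure (reachC ω κ γ !₂[0, 0, 1]) = closure (reachC ω κ γ !₂[0, 0, 1]) :=
  closure_reach_axisymmetric_general ω κ γ hω hκ s
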